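/- arXiv:2509.00161 — 5 statements merged into one kernel-verified Lean document; each statement's English description precedes it below -/
import Mathlib

section
/- The minimum eigenvalue of the Hamiltonian (I − |Φ⁺⟩⟨Φ⁺|)/2 ⊗ I_w + I_u ⊗ (I − |Φ⁺⟩⟨Φ⁺|)/2 acting on three qubits u, v, w (where the first term projects on qubits u,v and the second on qubits v,w) is exactly 1/4. In particular, no state can have qubit v simultaneously in an EPR pair with both u and w. -/
/-!
With `Q = |Φ⁺⟩⟨Φ⁺|` one has `⟨x, (1 - Q) x⟩ = ‖x‖² - |x₀₀ + x₁₁|²/2`, so the energy of `v` is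
`‖v‖² - ¼ (Σ_w |v₀₀w + v₁₁w|² + Σ_u |vᵤ₀₀ + vᵤ₁₁|²)`. These four amplitudes only involve the
triples `(v₀₀₀, v₁₁₀, v₀₁₁)` and `(v₁₁₁, v₀₀₁, v₁₀₀)`, and on each triple
`‖x + y‖² + ‖x + z‖² ≤ 3 (‖x‖² + ‖y‖² + ‖z‖²)`, with equality at `x = 2y = 2z`.
Hence the energy is at least `‖v‖²/4`, and `2|000⟩ + |011⟩ + |110⟩` attains it.
-/

open Matrix
open scoped Kronecker

theorem norm_add_sq_add_norm_add_sq_le_three_mul {E : Type*} [NormedAddCommGroup E]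
    [InnerProductSpace ℝ E] (x y z : E) :
    ‖x + y‖ ^ 2 + ‖x + z‖ ^ 2 ≤ 3 * (‖x‖ ^ 2 + ‖y‖ ^ 2 + ‖z‖ ^ 2) := by
  have hidentity : ‖x + y‖ ^ 2 + ‖x + z‖ ^ 2 + ‖x - y - z‖ ^ 2 + ‖y - z‖ ^ 2
      = 3 * (‖x‖ ^ 2 + ‖y‖ ^ 2 + ‖z‖ ^ 2) := by
    simp only [norm_add_sq_real, norm_sub_sq_real, inner_sub_left]
    ring
  linarith [sq_nonneg ‖x - y - z‖, sq_nonneg ‖y - z‖]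

section Kronecker

variable {α β R : Type*} [Fintype α] [Fintype β] [CommSemiring R]

theorem kronecker_one_mulVec_apply [DecidableEq β] (M : Matrix α α R) (v : α × β → R)
    (a : α) (b : β) :
    ((M ⊗ₖ (1 : Matrix β β R)) *ᵥ v) (a, b) = (M *ᵥ fun a => v (a, b)) a := by
  simp [mulVec, dotProduct, Fintype.sum_prod_type, one_apply]

theorem one_kronecker_mulVec_apply [DecidableEq α] (M : Matrix β β R) (v : α × β → R)
    (a : α) (b : β) :
    (((1 : Matrix α α R) ⊗ₖ M) *ᵥ v) (a, b) = (M *ᵥ fun b => v (a, b)) b := by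
  simp [mulVec, dotProduct, Fintype.sum_prod_type, one_apply]

theorem dotProduct_kronecker_one_mulVec [DecidableEq β] (M : Matrix α α R) (u v : α × β → R) :
    u ⬝ᵥ (M ⊗ₖ (1 : Matrix β β R)) *ᵥ v
      = ∑ b, (fun a => u (a, b)) ⬝ᵥ M *ᵥ (fun a => v (a, b)) := by
  simp only [dotProduct, Fintype.sum_prod_type, kronecker_one_mulVec_apply]
  exact Finset.sum_comm

theorem dotProduct_one_kronecker_mulVec [DecidableEq α] (M : Matrix β β R) (u v : α × β → R) :
    u ⬝ᵥ ((1 : Matrix α α R) ⊗ₖ M) *ᵥ v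
      = ∑ a, (fun b => u (a, b)) ⬝ᵥ M *ᵥ (fun b => v (a, b)) := by
  simp only [dotProduct, Fintype.sum_prod_type, one_kronecker_mulVec_apply]

theorem dotProduct_submatrix_equiv_mulVec (M : Matrix β β R) (e : α ≃ β) (u v : α → R) :
    u ⬝ᵥ M.submatrix e e *ᵥ v = (u ∘ e.symm) ⬝ᵥ M *ᵥ (v ∘ e.symm) := by
  rw [submatrix_mulVec_equiv, ← dotProduct_comp_equiv_symm]
  rfl

end Kronecker

section Chain

variable {α R : Type*} [DecidableEq α] [CommSemiring R]

def chainHamiltonian (M : Matrix (α × α) (α × α) R) : Matrix (α × α × α) (α × α × α) R :=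
  (M ⊗ₖ (1 : Matrix α α R)).submatrix (Equiv.prodAssoc α α α).symm (Equiv.prodAssoc α α α).symm
    + 1 ⊗ₖ M

theorem chainHamiltonian_apply (M : Matrix (α × α) (α × α) R) (p q : α × α × α) :
    chainHamiltonian M p q = M (p.1, p.2.1) (q.1, q.2.1) * (if p.2.2 = q.2.2 then 1 else 0)
      + (if p.1 = q.1 then 1 else 0) * M (p.2.1, p.2.2) (q.2.1, q.2.2) := by
  simp [chainHamiltonian, one_apply]

theorem dotProduct_chainHamiltonian_mulVec [Fintype α] (M : Matrix (α × α) (α × α) R)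
    (u v : α × α × α → R) :
    u ⬝ᵥ chainHamiltonian M *ᵥ v
      = ∑ c, (fun p : α × α => u (p.1, p.2, c)) ⬝ᵥ M *ᵥ (fun p => v (p.1, p.2, c))
        + ∑ a, (fun p : α × α => u (a, p)) ⬝ᵥ M *ᵥ (fun p => v (a, p)) := by
  rw [chainHamiltonian, add_mulVec, dotProduct_add, dotProduct_submatrix_equiv_mulVec,
    dotProduct_kronecker_one_mulVec, dotProduct_one_kronecker_mulVec]
  rfl

end Chain

theorem re_star_dotProduct_self {n : Type*} [Fintype n] (x : n → ℂ) :
    (star x ⬝ᵥ x).re = ∑ i, ‖x i‖ ^ 2 := by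
  simp [dotProduct, Complex.re_sum, Complex.sq_norm, Complex.normSq_apply]

theorem star_dotProduct_vecMulVec_mulVec {n R : Type*} [Fintype n] [CommSemiring R] [StarRing R]
    (x Φ : n → R) :
    star x ⬝ᵥ vecMulVec Φ (star Φ) *ᵥ x = star (star Φ ⬝ᵥ x) * (star Φ ⬝ᵥ x) := by
  rw [vecMulVec_mulVec, op_smul_eq_smul, dotProduct_smul, star_dotProduct x Φ, smul_eq_mul,
    mul_comm]

theorem re_star_dotProduct_one_sub_vecMulVec_mulVec {n : Type*} [Fintype n] [DecidableEq n]
    (Φ x : n → ℂ) :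
    (star x ⬝ᵥ (1 - vecMulVec Φ (star Φ)) *ᵥ x).re = ∑ i, ‖x i‖ ^ 2 - ‖star Φ ⬝ᵥ x‖ ^ 2 := by
  rw [sub_mulVec, one_mulVec, dotProduct_sub, star_dotProduct_vecMulVec_mulVec, Complex.sub_re,
    re_star_dotProduct_self, Complex.star_def, ← Complex.normSq_eq_conj_mul_self,
    Complex.ofReal_re, Complex.sq_norm]

noncomputable def eprState : Fin 2 × Fin 2 → ℂ :=
  fun p => if p.1 = p.2 then ((Real.sqrt 2 : ℝ) : ℂ)⁻¹ else 0

noncomputable def eprPenalty : Matrix (Fin 2 × Fin 2) (Fin 2 × Fin 2) ℂ :=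
  (2 : ℂ)⁻¹ • (1 - vecMulVec eprState (star eprState))

theorem star_eprState_dotProduct (x : Fin 2 × Fin 2 → ℂ) :
    star eprState ⬝ᵥ x = ((Real.sqrt 2 : ℝ) : ℂ)⁻¹ * (x (0, 0) + x (1, 1)) := by
  simp [eprState, dotProduct, Fintype.sum_prod_type, apply_ite (star : ℂ → ℂ), mul_add]

theorem re_star_dotProduct_eprPenalty_mulVec (x : Fin 2 × Fin 2 → ℂ) :
    (star x ⬝ᵥ eprPenalty *ᵥ x).re = (∑ i, ‖x i‖ ^ 2 - ‖x (0, 0) + x (1, 1)‖ ^ 2 / 2) / 2 := by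
  have hoverlap : ‖star eprState ⬝ᵥ x‖ ^ 2 = ‖x (0, 0) + x (1, 1)‖ ^ 2 / 2 := by
    rw [star_eprState_dotProduct, norm_mul, mul_pow, norm_inv, Complex.norm_real,
      Real.norm_eq_abs, inv_pow, sq_abs, Real.sq_sqrt zero_le_two, inv_mul_eq_div]
  rw [eprPenalty, smul_mulVec, dotProduct_smul, smul_eq_mul, ← Complex.ofReal_ofNat,
    ← Complex.ofReal_inv, Complex.re_ofReal_mul, re_star_dotProduct_one_sub_vecMulVec_mulVec,
    hoverlap, inv_mul_eq_div]

theorem re_star_dotProduct_chainHamiltonian_eprPenalty_mulVec (v : Fin 2 × Fin 2 × Fin 2 → ℂ) :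
    (star v ⬝ᵥ chainHamiltonian eprPenalty *ᵥ v).re
      = ∑ i, ‖v i‖ ^ 2 - (∑ c, ‖v (0, 0, c) + v (1, 1, c)‖ ^ 2
          + ∑ a, ‖v (a, 0, 0) + v (a, 1, 1)‖ ^ 2) / 4 := by
  rw [dotProduct_chainHamiltonian_mulVec, Complex.add_re, Complex.re_sum, Complex.re_sum]
  erw [Finset.sum_congr rfl fun c _ =>
      re_star_dotProduct_eprPenalty_mulVec fun p => v (p.1, p.2, c),
    Finset.sum_congr rfl fun a _ => re_star_dotProduct_eprPenalty_mulVec fun p => v (a, p)]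
  simp only [Fintype.sum_prod_type, Fin.sum_univ_two]
  ring

/-- The minimum eigenvalue of
`((I − |Φ⁺⟩⟨Φ⁺|)/2)_{u,v} + ((I − |Φ⁺⟩⟨Φ⁺|)/2)_{v,w}`
on three qubits `u, v, w` is exactly `1/4`: every state has energy at least
`(1/4)‖v‖²`, and some nonzero state attains this. In particular no state can have
qubit `v` simultaneously in an EPR pair with both `u` and `w`. -/
theorem epr_monogamy_min_eigenvalue
    (Φ : Fin 2 × Fin 2 → ℂ)
    (hΦ : Φ = fun p => if p.1 = p.2 then ((Real.sqrt 2 : ℝ) : ℂ)⁻¹ else 0)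
    (A : Matrix (Fin 2 × Fin 2) (Fin 2 × Fin 2) ℂ)
    (hA : A = (2 : ℂ)⁻¹ • (1 - Matrix.vecMulVec Φ (star Φ)))
    (H : Matrix (Fin 2 × Fin 2 × Fin 2) (Fin 2 × Fin 2 × Fin 2) ℂ)
    (hH : H = fun p q =>
      A (p.1, p.2.1) (q.1, q.2.1) * (if p.2.2 = q.2.2 then 1 else 0)
      + (if p.1 = q.1 then 1 else 0) * A (p.2.1, p.2.2) (q.2.1, q.2.2)) :
    (∀ v : Fin 2 × Fin 2 × Fin 2 → ℂ,
        (4 : ℝ)⁻¹ * (star v ⬝ᵥ v).re ≤ (star v ⬝ᵥ H.mulVec v).re) ∧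
    (∃ v : Fin 2 × Fin 2 × Fin 2 → ℂ, v ≠ 0 ∧
        (star v ⬝ᵥ H.mulVec v).re = (4 : ℝ)⁻¹ * (star v ⬝ᵥ v).re) := by
  obtain rfl : Φ = eprState := hΦ
  obtain rfl : A = eprPenalty := hA
  obtain rfl : H = chainHamiltonian eprPenalty := by
    ext p q
    rw [hH, chainHamiltonian_apply]
  simp only [re_star_dotProduct_chainHamiltonian_eprPenalty_mulVec, re_star_dotProduct_self,
    Fintype.sum_prod_type, Fin.sum_univ_two]
  refine ⟨fun v => ?_,
    fun p => if p = (0, 0, 0) then 2 else if p = (0, 1, 1) ∨ p = (1, 1, 0) then 1 else 0, ?_, ?_⟩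
  · have h₀ := norm_add_sq_add_norm_add_sq_le_three_mul (v (0, 0, 0)) (v (1, 1, 0)) (v (0, 1, 1))
    have h₁ := norm_add_sq_add_norm_add_sq_le_three_mul (v (1, 1, 1)) (v (0, 0, 1)) (v (1, 0, 0))
    rw [add_comm (v (1, 1, 1)), add_comm (v (1, 1, 1))] at h₁
    linarith [sq_nonneg ‖v (0, 1, 0)‖, sq_nonneg ‖v (1, 0, 1)‖]
  · intro h
    simpa using congrFun h (0, 0, 0)
  · norm_num
end

section
/- In the 2-dimensional periodic lattice Λ_2(n) with 3 | n, suppose vertices are colored so that the monochromatic subgraph is a disjoint union of cycles with no turns (every cycle is a straight line in some coordinate direction). Suppose additionally there is a numbering g : Λ_2(n) → ℤ/3ℤ such that along each monochromatic straight line the numbers increase by 1 (mod 3) in a fixed direction, and any two adjacent vertices of different colors have equal numbers. Then all straight lines are oriented along the same coordinate direction. -/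
/-- The Lee distance on `Λ_2(n) = (ℤ/nℤ)²`. -/
def leeDist (r n : ℕ) (x y : Fin r → ZMod n) : ℕ :=
  ∑ i, min ((((x i).val : ℤ) - ((y i).val : ℤ)).natAbs)
           (n - (((x i).val : ℤ) - ((y i).val : ℤ)).natAbs)

lemma leeDist_comm (r n : ℕ) (x y : Fin r → ZMod n) : leeDist r n x y = leeDist r n y x := by
  unfold leeDist
  refine Finset.sum_congr rfl fun i _ => ?_
  have : (((x i).val : ℤ) - ((y i).val : ℤ)).natAbs
      = (((y i).val : ℤ) - ((x i).val : ℤ)).natAbs := by omega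
  rw [this]

lemma lee_term_one {n : ℕ} [NeZero n] (hn : 3 ≤ n) (a : ZMod n) :
    min (((a.val : ℤ) - (((a + 1 : ZMod n)).val : ℤ)).natAbs)
      (n - (((a.val : ℤ) - (((a + 1 : ZMod n)).val : ℤ)).natAbs)) = 1 := by
  have hk : a.val < n := ZMod.val_lt a
  have h1 : (1 : ZMod n).val = 1 := ZMod.val_one'' (by omega)
  rcases Nat.lt_or_ge (a.val + 1) n with h | h
  · have hv : (a + 1 : ZMod n).val = a.val + 1 := by
      rw [ZMod.val_add_of_lt (by rw [h1]; omega), h1]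
    rw [hv]; omega
  · have hval : a.val = n - 1 := by omega
    have hv : (a + 1 : ZMod n).val = 0 := by
      rw [ZMod.val_add, h1, hval, Nat.sub_add_cancel (by omega), Nat.mod_self]
    rw [hv, hval]; omega

lemma leeDist_step {n : ℕ} [NeZero n] (hn : 3 ≤ n) (u : Fin 2 → ZMod n) (j : Fin 2) :
    leeDist 2 n u (Function.update u j (u j + 1)) = 1 := by
  unfold leeDist
  rw [Fin.sum_univ_two]
  fin_cases j
  · simp only [Function.update_self, Function.update_of_ne (show (1:Fin 2) ≠ 0 by decide),
      sub_self, Int.natAbs_zero, Nat.zero_min, Nat.min_zero, add_zero, zero_add,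
      Fin.isValue, Fin.mk_zero, Fin.mk_one]
    exact lee_term_one hn (u 0)
  · simp only [Function.update_self, Function.update_of_ne (show (0:Fin 2) ≠ 1 by decide),
      sub_self, Int.natAbs_zero, Nat.zero_min, Nat.min_zero, add_zero, zero_add,
      Fin.isValue, Fin.mk_zero, Fin.mk_one]
    exact lee_term_one hn (u 1)

/-- In `Λ_2(n)` (with `3 ∣ n`): if the monochromatic subgraph is a disjoint union of
straight lines (the same-colored neighbors of `u` are exactly those differing only in
coordinate `D u`), the numbering `g` increases by 1 (mod 3) along each line in a fixed
direction, and adjacent different-colored vertices have equal numbers, then all the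
straight lines are oriented along the same coordinate direction. -/
theorem straight_lines_uniformly_directed (n : ℕ) [NeZero n] (hn : 3 ≤ n) (h3 : 3 ∣ n)
    (c : (Fin 2 → ZMod n) → Fin 3) (g : (Fin 2 → ZMod n) → ZMod 3)
    (D : (Fin 2 → ZMod n) → Fin 2)
    (hline : ∀ u v : Fin 2 → ZMod n, leeDist 2 n u v = 1 →
      (c u = c v ↔ ∀ i : Fin 2, i ≠ D u → u i = v i))
    (hseq : ∀ u : Fin 2 → ZMod n,
      g (Function.update u (D u) (u (D u) + 1)) = g u + 1 ∨
      g (Function.update u (D u) (u (D u) + 1)) = g u - 1)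
    (hfix : ∀ u : Fin 2 → ZMod n,
      g (Function.update u (D u) (u (D u) + 1)) - g u
        = g u - g (Function.update u (D u) (u (D u) - 1)))
    (hdiff : ∀ u v : Fin 2 → ZMod n, leeDist 2 n u v = 1 → c u ≠ c v → g u = g v) :
    ∀ u v : Fin 2 → ZMod n, D u = D v := by
  classical
  haveI : Fact (1 < n) := ⟨by omega⟩
  have hone : (1 : ZMod n) ≠ 0 := one_ne_zero
  have hstepne : ∀ (u : Fin 2 → ZMod n) (j : Fin 2),
      Function.update u j (u j + 1) j ≠ u j := by
    intro u j
    rw [Function.update_self]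
    simpa using hone
  have hdist : ∀ (u : Fin 2 → ZMod n) (j : Fin 2),
      leeDist 2 n u (Function.update u j (u j + 1)) = 1 := leeDist_step hn
  -- D is constant along each line
  have Dline : ∀ u : Fin 2 → ZMod n,
      D (Function.update u (D u) (u (D u) + 1)) = D u := by
    intro u
    set u' := Function.update u (D u) (u (D u) + 1) with hu'
    have hc : c u = c u' := by
      refine (hline u u' (hdist u (D u))).mpr fun i hi => ?_
      rw [hu', Function.update_of_ne hi]
    have h2 := (hline u' u (by rw [leeDist_comm]; exact hdist u (D u))).mp hc.symm
    by_contra hne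
    exact hstepne u (D u) (h2 (D u) (fun h => hne h.symm))
  -- D is preserved when stepping off the line
  have Dkey : ∀ (u : Fin 2 → ZMod n) (j : Fin 2), j ≠ D u →
      D (Function.update u j (u j + 1)) = D u := by
    intro u j hj
    by_contra hne
    set w := Function.update u j (u j + 1) with hw
    have hDw : D w = j :=
      (by decide : ∀ x i j : Fin 2, x ≠ i → j ≠ i → x = j) (D w) (D u) j hne hj
    have hcuw : c u ≠ c w := by
      intro h
      exact hstepne u j ((hline u w (hdist u j)).mp h j hj).symm
    have hguw : g u = g w := hdiff u w (hdist u j) hcuw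
    set u' := Function.update u (D u) (u (D u) + 1) with hu'
    have hDu' : D u' = D u := Dline u
    set w' := Function.update w (D u) (w (D u) + 1) with hw'
    have hw'' : w' = Function.update u' j (u' j + 1) := by
      rw [hw', hu', hw]
      rw [Function.update_of_ne hj, Function.update_of_ne (Ne.symm hj)]
      exact Function.update_comm hj _ _ _
    have hcww' : c w ≠ c w' := by
      intro h
      have := (hline w w' (hdist w (D u))).mp h (D u) (by rw [hDw]; exact Ne.symm hj)
      exact hstepne w (D u) this.symm
    have hgww' : g w = g w' := hdiff _ _ (hdist w (D u)) hcww'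
    have hcu'w' : c u' ≠ c w' := by
      intro h
      have := (hline u' w' (by rw [hw'']; exact hdist u' j)).mp h j (by rw [hDu']; exact hj)
      rw [hw''] at this
      exact hstepne u' j this.symm
    have hgu'w' : g u' = g w' := hdiff _ _ (by rw [hw'']; exact hdist u' j) hcu'w'
    have hgg : g u' = g u := by rw [hgu'w', ← hgww', ← hguw]
    have h13 : (1 : ZMod 3) ≠ 0 := by decide
    have hm13 : (-1 : ZMod 3) ≠ 0 := by decide
    rcases hseq u with h | h <;> rw [← hu'] at h <;> rw [hgg] at h
    · exact h13 (by linear_combination -h)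
    · exact hm13 (by linear_combination -h)
  have Dstep : ∀ (u : Fin 2 → ZMod n) (j : Fin 2),
      D (Function.update u j (u j + 1)) = D u := by
    intro u j
    by_cases h : j = D u
    · subst h; exact Dline u
    · exact Dkey u j h
  have Diter : ∀ (k : ℕ) (u : Fin 2 → ZMod n) (j : Fin 2),
      D (Function.update u j (u j + (k : ZMod n))) = D u := by
    intro k
    induction k with
    | zero => intro u j; simp [Function.update_eq_self]
    | succ k ih =>
      intro u j
      have heq : Function.update u j (u j + ((k + 1 : ℕ) : ZMod n))
          = Function.update (Function.update u j (u j + (k : ZMod n))) j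
              ((Function.update u j (u j + (k : ZMod n))) j + 1) := by
        rw [Function.update_self, Function.update_idem]
        congr 1
        push_cast
        ring
      rw [heq, Dstep, ih]
  intro u v
  set a : ℕ := (v 0 - u 0).val with ha
  set b : ℕ := (v 1 - u 1).val with hb
  set u1 := Function.update u 0 (u 0 + (a : ZMod n)) with hu1
  have h1 : D u1 = D u := Diter a u 0
  have h2 : D (Function.update u1 1 (u1 1 + (b : ZMod n))) = D u1 := Diter b u1 1
  have hcast : ∀ x : ZMod n, ((x.val : ℕ) : ZMod n) = x := by
    intro x; rw [ZMod.natCast_val, ZMod.cast_id]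
  have h3 : Function.update u1 1 (u1 1 + (b : ZMod n)) = v := by
    funext x
    fin_cases x
    · simp only [Fin.mk_zero, Fin.isValue]
      rw [Function.update_of_ne (by decide : (0:Fin 2) ≠ 1), hu1, Function.update_self,
        ha, hcast]
      ring
    · simp only [Fin.mk_one, Fin.isValue]
      rw [Function.update_self, hu1, Function.update_of_ne (by decide : (1:Fin 2) ≠ 0),
        hb, hcast]
      ring
  rw [← h1, ← h2, h3]
end

section
/- Suppose c : Λ_r(n) → {0,1,2} colors the lattice (n ≥ 5, 3 | n) so that each monochromatic component is a cycle numbered sequentially by g : Λ_r(n) → ℤ/3ℤ (numbers increase by 1 mod 3 along each cycle) and adjacent different-colored vertices have equal numbers. Then no monochromatic cycle contains a turn: there exist no u, v, w with c(u)=c(v)=c(w), d(u,v)=d(v,w)=1, and u,w differing in exactly two coordinates. -/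
lemma zmod_succ_val {n : ℕ} [NeZero n] (hn : 5 ≤ n) (x y : ZMod n) :
    y = x + 1 ↔ (y.val = x.val + 1 ∨ (x.val = n - 1 ∧ y.val = 0)) := by
  haveI : Fact (1 < n) := ⟨by omega⟩
  have hx := ZMod.val_lt x
  have hy := ZMod.val_lt y
  have hv : (x + 1).val = if x.val + 1 = n then 0 else x.val + 1 := by
    rw [ZMod.val_add, ZMod.val_one]
    split_ifs with h
    · rw [h, Nat.mod_self]
    · exact Nat.mod_eq_of_lt (by omega)
  have h1 : y = x + 1 ↔ y.val = (x + 1).val :=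
    ⟨fun h => by rw [h], fun h => ZMod.val_injective n h⟩
  rw [h1, hv]
  split_ifs with h <;> omega

lemma term_one {n : ℕ} [NeZero n] (hn : 5 ≤ n) (x y : ZMod n) :
    min (((x.val : ℤ) - (y.val : ℤ)).natAbs) (n - ((x.val : ℤ) - (y.val : ℤ)).natAbs) = 1 ↔
    (y = x + 1 ∨ y = x - 1) := by
  have hx := ZMod.val_lt x
  have hy := ZMod.val_lt y
  have h2 : y = x - 1 ↔ x = y + 1 := by
    constructor
    · rintro rfl; ring
    · rintro rfl; ring
  rw [zmod_succ_val hn x y, h2, zmod_succ_val hn y x, Nat.min_def]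
  rcases Nat.le_total x.val y.val with h | h
  · have habs : ((x.val : ℤ) - y.val).natAbs = y.val - x.val := by omega
    rw [habs]; split_ifs <;> omega
  · have habs : ((x.val : ℤ) - y.val).natAbs = x.val - y.val := by omega
    rw [habs]; split_ifs <;> omega

lemma term_zero {n : ℕ} [NeZero n] (hn : 5 ≤ n) (x y : ZMod n) :
    min (((x.val : ℤ) - (y.val : ℤ)).natAbs) (n - ((x.val : ℤ) - (y.val : ℤ)).natAbs) = 0 ↔
    x = y := by
  have hx := ZMod.val_lt x
  have hy := ZMod.val_lt y
  have h1 : x = y ↔ x.val = y.val :=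
    ⟨fun h => by rw [h], fun h => ZMod.val_injective n h⟩
  rw [h1, Nat.min_def]
  rcases Nat.le_total x.val y.val with h | h
  · have habs : ((x.val : ℤ) - y.val).natAbs = y.val - x.val := by omega
    rw [habs]; split_ifs <;> omega
  · have habs : ((x.val : ℤ) - y.val).natAbs = x.val - y.val := by omega
    rw [habs]; split_ifs <;> omega

lemma leeDist_one_iff {r n : ℕ} [NeZero n] (hn : 5 ≤ n) (u v : Fin r → ZMod n) :
    leeDist r n u v = 1 ↔
      ∃ i, (v i = u i + 1 ∨ v i = u i - 1) ∧ ∀ j, j ≠ i → v j = u j := by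
  set f : Fin r → ℕ := fun i =>
    min ((((u i).val : ℤ) - ((v i).val : ℤ)).natAbs)
        (n - (((u i).val : ℤ) - ((v i).val : ℤ)).natAbs) with hf
  have hld : leeDist r n u v = ∑ i, f i := rfl
  constructor
  · intro h
    rw [hld] at h
    have hex : ∃ i, f i ≠ 0 := by
      by_contra hc
      push_neg at hc
      rw [Finset.sum_eq_zero (fun i _ => hc i)] at h
      omega
    obtain ⟨i, hi⟩ := hex
    have hle : f i ≤ 1 := h ▸ Finset.single_le_sum (fun j _ => Nat.zero_le _) (Finset.mem_univ i)
    have hfi : f i = 1 := by omega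
    have hrest : ∑ j ∈ Finset.univ.erase i, f j = 0 := by
      have := Finset.add_sum_erase Finset.univ f (Finset.mem_univ i)
      omega
    refine ⟨i, (term_one hn (u i) (v i)).mp hfi, fun j hj => ?_⟩
    have hj0 : f j = 0 := by
      have := (Finset.sum_eq_zero_iff).mp hrest j (Finset.mem_erase.mpr ⟨hj, Finset.mem_univ j⟩)
      exact this
    exact ((term_zero hn (u j) (v j)).mp hj0).symm
  · rintro ⟨i, hi, hj⟩
    rw [hld, Finset.sum_eq_single i]
    · exact (term_one hn (u i) (v i)).mpr hi
    · intro j _ hji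
      exact (term_zero hn (u j) (v j)).mpr (hj j hji).symm
    · intro h
      exact absurd (Finset.mem_univ i) h

lemma zmod3_aux : ∀ a b c d : ZMod 3,
    (a = b + 1 ∨ a = b - 1) → (c = b + 1 ∨ c = b - 1) → a ≠ c →
    (d = a + 1 ∨ d = a - 1) → (d = c + 1 ∨ d = c - 1) → b ≠ d → False := by decide

/-- If each monochromatic component of `Λ_r(n)` (`n ≥ 5`, `3 ∣ n`) is a cycle numbered
sequentially mod 3 (same-colored neighbors differ by ±1 mod 3, and the two same-colored
neighbors of any vertex get distinct numbers) while adjacent different-colored vertices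
have equal numbers, then no monochromatic cycle contains a turn. -/
theorem no_turns_in_monochromatic_cycles (r n : ℕ) (hn : 5 ≤ n) (h3 : 3 ∣ n) [NeZero n]
    (c : (Fin r → ZMod n) → Fin 3) (g : (Fin r → ZMod n) → ZMod 3)
    (hdeg : ∀ u : Fin r → ZMod n, {v | leeDist r n u v = 1 ∧ c v = c u}.ncard = 2)
    (hseq : ∀ u v : Fin r → ZMod n, leeDist r n u v = 1 → c v = c u →
      (g v = g u + 1 ∨ g v = g u - 1))
    (hcons : ∀ u a b : Fin r → ZMod n, leeDist r n u a = 1 → leeDist r n u b = 1 →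
      c a = c u → c b = c u → a ≠ b → g a ≠ g b)
    (hdiff : ∀ u v : Fin r → ZMod n, leeDist r n u v = 1 → c v ≠ c u → g v = g u) :
    ¬ ∃ u v w : Fin r → ZMod n,
        c u = c v ∧ c v = c w ∧ leeDist r n u v = 1 ∧ leeDist r n v w = 1 ∧
        (Finset.univ.filter fun i : Fin r => u i ≠ w i).card = 2 := by
  rintro ⟨u, v, w, hcuv, hcvw, huv, hvw, hcard⟩
  haveI : Fact (1 < n) := ⟨by omega⟩
  obtain ⟨i, hvi, hvrest⟩ := (leeDist_one_iff hn u v).mp huv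
  obtain ⟨j, hwj, hwrest⟩ := (leeDist_one_iff hn v w).mp hvw
  -- i ≠ j
  have hij : i ≠ j := by
    rintro rfl
    have hsub : (Finset.univ.filter fun k : Fin r => u k ≠ w k) ⊆ {i} := by
      intro k hk
      simp only [Finset.mem_filter, Finset.mem_univ, true_and] at hk
      simp only [Finset.mem_singleton]
      by_contra hki
      exact hk ((hvrest k hki).symm.trans (hwrest k hki).symm |>.symm ▸ rfl)
    have := Finset.card_le_card hsub
    simp only [Finset.card_singleton] at this
    omega
  have huj : u j = v j := (hvrest j (Ne.symm hij)).symm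
  have hwi : w i = v i := hwrest i hij
  -- the fourth vertex z
  set z : Fin r → ZMod n := Function.update u j (w j) with hz
  have hzj : z j = w j := Function.update_self j (w j) u
  have hzne : ∀ k, k ≠ j → z k = u k := fun k hk => Function.update_of_ne hk (w j) u
  have huz : leeDist r n u z = 1 := by
    rw [leeDist_one_iff hn]
    refine ⟨j, ?_, fun k hk => hzne k hk⟩
    rw [hzj, huj]
    exact hwj
  have hwz : leeDist r n w z = 1 := by
    rw [leeDist_one_iff hn]
    refine ⟨i, ?_, fun k hk => ?_⟩
    · rw [hzne i hij, hwi]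
      rcases hvi with h | h
      · right; rw [h]; ring
      · left; rw [h]; ring
    · by_cases hkj : k = j
      · rw [hkj, hzj]
      · rw [hzne k hkj]
        exact ((hwrest k hkj).trans (hvrest k hk)).symm
  -- v ≠ z
  have hviu : v i ≠ u i := by
    rcases hvi with h | h <;> rw [h] <;> intro hh
    · exact one_ne_zero (by rwa [add_eq_left] at hh)
    · exact one_ne_zero (by rwa [sub_eq_self] at hh)
  have hvz : v ≠ z := by
    intro h
    apply hviu
    rw [h, hzne i hij]
  -- u ≠ w
  have huw : u ≠ w := by
    intro h
    subst h
    simp at hcard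
  -- symmetric distances
  have hvu : leeDist r n v u = 1 := by rw [leeDist_comm]; exact huv
  -- numbering facts
  have hgu : g u = g v + 1 ∨ g u = g v - 1 := hseq v u hvu hcuv
  have hgw : g w = g v + 1 ∨ g w = g v - 1 := hseq v w hvw hcvw.symm
  have hguw : g u ≠ g w := hcons v u w hvu hvw hcuv hcvw.symm huw
  by_cases hcz : c z = c u
  · have hgz1 : g z = g u + 1 ∨ g z = g u - 1 := hseq u z huz hcz
    have hgz2 : g z = g w + 1 ∨ g z = g w - 1 :=
      hseq w z hwz (by rw [hcz, hcuv, hcvw])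
    have hgvz : g v ≠ g z := hcons u v z huv huz hcuv.symm hcz hvz
    exact zmod3_aux (g u) (g v) (g w) (g z) hgu hgw hguw hgz1 hgz2 hgvz
  · have h1 : g z = g u := hdiff u z huz hcz
    have h2 : g z = g w := hdiff w z hwz (fun h => hcz (by rw [h, ← hcvw, ← hcuv]))
    exact hguw (h1 ▸ h2 ▸ rfl)
end

section
/- Suppose a coloring of Λ_r(n) (n ≥ 3) is 'uniformly directed' toward dimension d: the monochromatic subgraph is a disjoint union of straight cycles each running along coordinate d. Then for any fixed value t of coordinate d, any two vertices u, v with u_d = v_d = t that are adjacent in the lattice have different colors. Consequently, if additionally adjacent different-colored vertices must have equal ℤ/3ℤ numbers, then the numbering is constant on the (connected) sublattice {u : u_d = t}. -/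
/-- If a coloring of `Λ_r(n)` (`n ≥ 3`) is uniformly directed toward dimension `d`
(adjacent vertices are same-colored iff they differ only in coordinate `d`), then any
two adjacent vertices with the same `d`-th coordinate have different colors; and if
additionally adjacent different-colored vertices have equal `ℤ/3ℤ` numbers, the
numbering is constant on every slice `{u : u_d = t}`. -/
theorem uniformly_directed_slices (r n : ℕ) (hr : 2 ≤ r) (hn : 3 ≤ n) [NeZero n]
    (d : Fin r) (c : (Fin r → ZMod n) → Fin 3)
    (hstraight : ∀ u v : Fin r → ZMod n, leeDist r n u v = 1 →
      (c u = c v ↔ ∀ i : Fin r, i ≠ d → u i = v i)) :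
    (∀ u v : Fin r → ZMod n, leeDist r n u v = 1 → u d = v d → c u ≠ c v) ∧
    (∀ g : (Fin r → ZMod n) → ZMod 3,
      (∀ u v : Fin r → ZMod n, leeDist r n u v = 1 → c u ≠ c v → g u = g v) →
      ∀ (t : ZMod n) (u v : Fin r → ZMod n), u d = t → v d = t → g u = g v) := by
  haveI : Fact (1 < n) := ⟨by omega⟩
  have hself : ∀ u : Fin r → ZMod n, leeDist r n u u = 0 := by
    intro u; unfold leeDist; apply Finset.sum_eq_zero; intro i _; simp
  have part1 : ∀ u v : Fin r → ZMod n, leeDist r n u v = 1 → u d = v d → c u ≠ c v := by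
    intro u v h1 hd hc
    have hall := (hstraight u v h1).mp hc
    have huv : u = v := by
      funext i
      by_cases hi : i = d
      · subst hi; exact hd
      · exact hall i hi
    rw [huv, hself] at h1
    omega
  refine ⟨part1, ?_⟩
  intro g hg t u v hu hv
  -- unit step along coordinate i ≠ d
  have hstep : ∀ (w : Fin r → ZMod n) (i : Fin r), i ≠ d → w d = t →
      g w = g (Function.update w i (w i + 1)) := by
    intro w i hid hwd
    set w' := Function.update w i (w i + 1) with hw'
    have hdist : leeDist r n w w' = 1 := by
      unfold leeDist
      rw [Finset.sum_eq_single i]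
      · have h1 : w' i = w i + 1 := Function.update_self i _ w
        rw [h1]
        have hvlt : (w i).val < n := ZMod.val_lt _
        have hval : (w i + 1).val = ((w i).val + 1) % n := by
          rw [ZMod.val_add, ZMod.val_one]
        by_cases hc : (w i).val + 1 < n
        · rw [hval, Nat.mod_eq_of_lt hc]
          push_cast
          omega
        · have heq : (w i).val + 1 = n := by omega
          rw [hval, heq, Nat.mod_self]
          push_cast
          omega
      · intro j _ hji
        have : w' j = w j := Function.update_of_ne hji _ w
        rw [this]
        simp
      · intro h; exact absurd (Finset.mem_univ i) h
    have hwd' : w' d = t := by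
      rw [hw', Function.update_of_ne (Ne.symm hid) _ w]; exact hwd
    have hne : c w ≠ c w' := part1 w w' hdist (by rw [hwd, hwd'])
    exact hg w w' hdist hne
  -- iterate steps
  have hiter : ∀ (k : ℕ) (w : Fin r → ZMod n) (i : Fin r), i ≠ d → w d = t →
      g w = g (Function.update w i (w i + (k : ZMod n))) := by
    intro k
    induction k with
    | zero => intro w i hid hwd; simp
    | succ k ih =>
      intro w i hid hwd
      have h1 := ih w i hid hwd
      set w₁ := Function.update w i (w i + (k : ZMod n)) with hw₁
      have hw₁d : w₁ d = t := by
        rw [hw₁, Function.update_of_ne (Ne.symm hid) _ w]; exact hwd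
      have h2 := hstep w₁ i hid hw₁d
      have h3 : Function.update w₁ i (w₁ i + 1) =
          Function.update w i (w i + ((k + 1 : ℕ) : ZMod n)) := by
        rw [hw₁, Function.update_idem, Function.update_self]
        push_cast
        ring_nf
      rw [h3] at h2
      rw [h1, h2]
  -- change one coordinate to an arbitrary value
  have hcoord : ∀ (w : Fin r → ZMod n) (i : Fin r) (a : ZMod n), i ≠ d → w d = t →
      g w = g (Function.update w i a) := by
    intro w i a hid hwd
    have := hiter (a - w i).val w i hid hwd
    have hcast : w i + (((a - w i).val : ℕ) : ZMod n) = a := by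
      rw [ZMod.natCast_val, ZMod.cast_id]
      ring
    rwa [hcast] at this
  -- induction over the set of coordinates where u and v may differ
  have hmain : ∀ (s : Finset (Fin r)) (u v : Fin r → ZMod n), u d = t → v d = t →
      (∀ i : Fin r, i ∉ s → u i = v i) → g u = g v := by
    intro s
    induction s using Finset.induction_on with
    | empty =>
      intro u v _ _ h
      have : u = v := funext fun i => h i (Finset.notMem_empty i)
      rw [this]
    | @insert j s hjs ih =>
      intro u v hu hv h
      by_cases hjd : j = d
      · apply ih u v hu hv
        intro i his
        by_cases hij : i = j
        · subst hij; subst hjd; rw [hu, hv]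
        · exact h i (by simp [his, hij])
      · set u' := Function.update u j (v j) with hu'
        have h1 : g u = g u' := hcoord u j (v j) hjd hu
        have hu'd : u' d = t := by
          rw [hu', Function.update_of_ne (Ne.symm hjd) _ u]; exact hu
        have h2 : g u' = g v := by
          apply ih u' v hu'd hv
          intro i his
          by_cases hij : i = j
          · subst hij; rw [hu', Function.update_self]
          · rw [hu', Function.update_of_ne hij _ u]
            exact h i (by simp [his, hij])
        rw [h1, h2]
  exact hmain Finset.univ u v hu hv (fun i hi => absurd (Finset.mem_univ i) hi)
end

section
/- Define a coloring c of Λ_r(n) (with 3 | n, n ≥ 3, r ≥ 2) by c(u) = (u_2 + u_3 + ... + u_r) mod 3 and a numbering g(u) = u_1 mod 3. Then: (i) any two adjacent vertices differing only in coordinate 1 have the same color and numbers differing by exactly 1 mod 3; (ii) any two adjacent vertices agreeing in coordinate 1 have different colors and the same number; (iii) every vertex has exactly two same-colored neighbors (so n_u = 2 for all u). -/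
lemma term_zero_s18 (n : ℕ) [NeZero n] (a b : ZMod n) :
    min (((a.val:ℤ) - (b.val:ℤ)).natAbs) (n - ((a.val:ℤ) - (b.val:ℤ)).natAbs) = 0 ↔ a = b := by
  have ha := ZMod.val_lt a; have hb := ZMod.val_lt b
  constructor
  · intro h
    have : a.val = b.val := by omega
    exact ZMod.val_injective n this
  · rintro rfl; simp

lemma add_one_val (n : ℕ) (hn : 3 ≤ n) (a b : ZMod n) :
    haveI : NeZero n := ⟨by omega⟩
    (b = a + 1 ↔ b.val = (a.val + 1) % n) := by
  haveI : NeZero n := ⟨by omega⟩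
  haveI : Fact (1 < n) := ⟨by omega⟩
  constructor
  · rintro rfl; rw [ZMod.val_add, ZMod.val_one]
  · intro h
    apply ZMod.val_injective n
    rw [h, ZMod.val_add, ZMod.val_one]

lemma term_one_s18 (n : ℕ) (hn : 3 ≤ n) (a b : ZMod n) :
    haveI : NeZero n := ⟨by omega⟩
    (min (((a.val:ℤ) - (b.val:ℤ)).natAbs) (n - ((a.val:ℤ) - (b.val:ℤ)).natAbs) = 1 ↔
      b = a + 1 ∨ b = a - 1) := by
  haveI : NeZero n := ⟨by omega⟩
  have ha := ZMod.val_lt a; have hb := ZMod.val_lt b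
  have h1 : b = a + 1 ↔ b.val = (a.val + 1) % n := add_one_val n hn a b
  have h2 : a = b + 1 ↔ a.val = (b.val + 1) % n := add_one_val n hn b a
  have h2' : b = a - 1 ↔ a = b + 1 := by constructor <;> intro h <;> [rw [h]; rw [h]] <;> ring
  rw [h1, h2', h2]
  have e1 : (a.val + 1) % n = if a.val + 1 = n then 0 else a.val + 1 := by
    split <;> rename_i h <;> [simp [h]; exact Nat.mod_eq_of_lt (by omega)]
  have e2 : (b.val + 1) % n = if b.val + 1 = n then 0 else b.val + 1 := by
    split <;> rename_i h <;> [simp [h]; exact Nat.mod_eq_of_lt (by omega)]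
  rw [e1, e2]
  split <;> split <;> omega

lemma dist_one_iff (r n : ℕ) (hn : 3 ≤ n) [NeZero n] (u v : Fin r → ZMod n) :
    leeDist r n u v = 1 ↔
      ∃ j : Fin r, ∃ s : ZMod n, (s = 1 ∨ s = -1) ∧ v = Function.update u j (u j + s) := by
  set t : Fin r → ℕ := fun i =>
    min ((((u i).val : ℤ) - ((v i).val : ℤ)).natAbs)
        (n - (((u i).val : ℤ) - ((v i).val : ℤ)).natAbs) with ht
  have hlee : leeDist r n u v = ∑ i, t i := rfl
  constructor
  · intro h
    rw [hlee] at h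
    obtain ⟨j, -, hj⟩ := Finset.exists_ne_zero_of_sum_ne_zero (f := t)
      (by rw [h]; exact one_ne_zero)
    have hle : t j ≤ 1 := by
      rw [← h]
      exact Finset.single_le_sum (fun i _ => Nat.zero_le _) (Finset.mem_univ j)
    have htj : t j = 1 := by omega
    have hrest : ∑ i ∈ Finset.univ.erase j, t i = 0 := by
      have := Finset.add_sum_erase Finset.univ t (Finset.mem_univ j)
      omega
    have hothers : ∀ i, i ≠ j → v i = u i := by
      intro i hij
      have : t i = 0 := by
        have := (Finset.sum_eq_zero_iff).mp hrest i (Finset.mem_erase.mpr ⟨hij, Finset.mem_univ i⟩)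
        exact this
      exact ((term_zero_s18 n (u i) (v i)).mp this).symm
    have hvj : v j = u j + 1 ∨ v j = u j - 1 := (term_one_s18 n hn (u j) (v j)).mp htj
    have hv : v = Function.update u j (v j) := by
      funext i
      by_cases hij : i = j
      · subst hij; simp
      · rw [Function.update_of_ne hij]; exact hothers i hij
    rcases hvj with h1 | h1
    · exact ⟨j, 1, Or.inl rfl, by rw [hv, h1]⟩
    · exact ⟨j, -1, Or.inr rfl, by rw [hv, h1, sub_eq_add_neg]⟩
  · rintro ⟨j, s, hs, rfl⟩
    rw [hlee]
    rw [Finset.sum_eq_single_of_mem j (Finset.mem_univ j)]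
    · show min _ _ = 1
      rw [term_one_s18 n hn]
      rw [Function.update_self]
      rcases hs with rfl | rfl
      · exact Or.inl rfl
      · exact Or.inr (by rw [sub_eq_add_neg])
    · intro i _ hij
      show min _ _ = 0
      rw [term_zero_s18 n]
      rw [Function.update_of_ne hij]

/-- For the coloring `c(u) = (u_2 + ⋯ + u_r) mod 3` and numbering `g(u) = u_1 mod 3`
of `Λ_r(n)` (with `3 ∣ n`, `n ≥ 3`, `r ≥ 2`; here coordinate 1 is `Fin r`'s index 0):
(i) adjacent vertices differing only in coordinate 1 have the same color and numbers
differing by exactly 1 mod 3; (ii) adjacent vertices agreeing in coordinate 1 have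
different colors and the same number; (iii) every vertex has exactly two same-colored
neighbors. -/
theorem explicit_striped_tiling (r n : ℕ) (hr : 2 ≤ r) (hn : 3 ≤ n) (h3 : 3 ∣ n)
    [NeZero n]
    (i0 : Fin r) (hi0 : (i0 : ℕ) = 0)
    (c : (Fin r → ZMod n) → ZMod 3)
    (hc : c = fun u => ∑ i ∈ Finset.univ.filter (fun i : Fin r => i ≠ i0),
      ZMod.castHom h3 (ZMod 3) (u i))
    (g : (Fin r → ZMod n) → ZMod 3)
    (hg : g = fun u => ZMod.castHom h3 (ZMod 3) (u i0)) :
    (∀ (u : Fin r → ZMod n) (s : ZMod n), s = 1 ∨ s = -1 →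
      c (Function.update u i0 (u i0 + s)) = c u ∧
      (g (Function.update u i0 (u i0 + s)) = g u + 1 ∨
        g (Function.update u i0 (u i0 + s)) = g u - 1)) ∧
    (∀ (u : Fin r → ZMod n) (j : Fin r) (s : ZMod n), j ≠ i0 → s = 1 ∨ s = -1 →
      c (Function.update u j (u j + s)) ≠ c u ∧
      g (Function.update u j (u j + s)) = g u) ∧
    (∀ u : Fin r → ZMod n, {v | leeDist r n u v = 1 ∧ c v = c u}.ncard = 2) := by
  set φ := ZMod.castHom h3 (ZMod 3) with hφ
  have hφs : ∀ s : ZMod n, s = 1 ∨ s = -1 → φ s = 1 ∨ φ s = -1 := by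
    rintro s (rfl|rfl)
    · left; exact map_one φ
    · right; rw [map_neg, map_one]
  have key1 : ∀ (u : Fin r → ZMod n) (s : ZMod n), s = 1 ∨ s = -1 →
      c (Function.update u i0 (u i0 + s)) = c u ∧
      (g (Function.update u i0 (u i0 + s)) = g u + 1 ∨
        g (Function.update u i0 (u i0 + s)) = g u - 1) := by
    intro u s hs
    constructor
    · simp only [hc]
      apply Finset.sum_congr rfl
      intro i hi
      rw [Function.update_of_ne (Finset.mem_filter.mp hi).2]
    · simp only [hg, Function.update_self, map_add]
      rcases hs with rfl|rfl
      · left; rw [map_one]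
      · right; rw [map_neg, map_one, sub_eq_add_neg]
  have key2 : ∀ (u : Fin r → ZMod n) (j : Fin r) (s : ZMod n), j ≠ i0 → s = 1 ∨ s = -1 →
      c (Function.update u j (u j + s)) ≠ c u ∧
      g (Function.update u j (u j + s)) = g u := by
    intro u j s hj hs
    have hjF : j ∈ Finset.univ.filter (fun i : Fin r => i ≠ i0) :=
      Finset.mem_filter.mpr ⟨Finset.mem_univ j, hj⟩
    constructor
    · simp only [hc]
      have e1 : ∑ i ∈ Finset.univ.filter (fun i : Fin r => i ≠ i0),
          φ (Function.update u j (u j + s) i)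
          = φ (u j + s) + ∑ i ∈ (Finset.univ.filter (fun i : Fin r => i ≠ i0)) \ {j},
              φ (u i) := by
        calc ∑ i ∈ Finset.univ.filter (fun i : Fin r => i ≠ i0),
              φ (Function.update u j (u j + s) i)
            = ∑ i ∈ Finset.univ.filter (fun i : Fin r => i ≠ i0),
              Function.update (fun i => φ (u i)) j (φ (u j + s)) i := by
              apply Finset.sum_congr rfl
              intro i _
              by_cases h : i = j
              · subst h; simp
              · rw [Function.update_of_ne h, Function.update_of_ne h]
          _ = _ := Finset.sum_update_of_mem hjF _ _
      have e2 : ∑ i ∈ Finset.univ.filter (fun i : Fin r => i ≠ i0), φ (u i)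
          = φ (u j) + ∑ i ∈ (Finset.univ.filter (fun i : Fin r => i ≠ i0)) \ {j},
              φ (u i) := by
        rw [← Finset.erase_eq]
        exact (Finset.add_sum_erase _ _ hjF).symm
      rw [e1, e2]
      intro heq
      have h0 : φ (u j + s) = φ (u j) := add_right_cancel heq
      rw [map_add] at h0
      have hz : φ s = 0 := by
        have := add_eq_left.mp h0
        exact this
      rcases hφs s hs with h1 | h1 <;> rw [h1] at hz <;> exact absurd hz (by decide)
    · simp only [hg]
      rw [Function.update_of_ne (Ne.symm hj)]
  refine ⟨key1, key2, ?_⟩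
  intro u
  have hset : {v | leeDist r n u v = 1 ∧ c v = c u} =
      {Function.update u i0 (u i0 + 1), Function.update u i0 (u i0 + -1)} := by
    ext v
    simp only [Set.mem_setOf_eq, Set.mem_insert_iff, Set.mem_singleton_iff]
    constructor
    · rintro ⟨hd, hcv⟩
      obtain ⟨j, s, hs, rfl⟩ := (dist_one_iff r n hn u v).mp hd
      by_cases hj : j = i0
      · subst hj
        rcases hs with rfl|rfl
        · left; rfl
        · right; rfl
      · exact absurd hcv (key2 u j s hj hs).1
    · rintro (rfl|rfl)
      · exact ⟨(dist_one_iff r n hn u _).mpr ⟨i0, 1, Or.inl rfl, rfl⟩,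
          (key1 u 1 (Or.inl rfl)).1⟩
      · exact ⟨(dist_one_iff r n hn u _).mpr ⟨i0, -1, Or.inr rfl, rfl⟩,
          (key1 u (-1) (Or.inr rfl)).1⟩
  rw [hset]
  apply Set.ncard_pair
  intro h
  have h0 := congrFun h i0
  simp only [Function.update_self] at h0
  have h2 : (2 : ZMod n) = 0 := by linear_combination h0
  have h2' : ((2:ℕ) : ZMod n) = 0 := by exact_mod_cast h2
  have hdvd := (ZMod.natCast_eq_zero_iff 2 n).mp h2'
  have := Nat.le_of_dvd (by norm_num) hdvd
  omega
end
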